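/- Let X be a g-tuple of compact self-adjoint operators on H with no nontrivial finite dimensional reducing subspaces, and suppose 0 is in the finite interior of K_X. Then the noncommutative convex hull K_X has no absolute extreme points. -/

import Mathlib

set_option maxHeartbeats 1000000
set_option synthInstance.maxHeartbeats 400000

instance piLpCompleteSpace {ι : Type*} [Fintype ι] (β : ι → Type*)
    [∀ i, UniformSpace (β i)] [∀ i, CompleteSpace (β i)] : CompleteSpace (PiLp 2 β) :=
  (PiLp.uniformEquiv 2 β).completeSpace_iff.2 (inferInstance : CompleteSpace (∀ i, β i))

/-- Finite amplification `I_m ⊗ X` acting on `E^m = PiLp 2 (fun _ : Fin m => E)`. -/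
noncomputable def amp {E : Type*} [NormedAddCommGroup E] [InnerProductSpace ℂ E]
    (m : ℕ) (X : E →L[ℂ] E) :
    PiLp 2 (fun _ : Fin m => E) →L[ℂ] PiLp 2 (fun _ : Fin m => E) :=
  ((PiLp.continuousLinearEquiv 2 ℂ (fun _ : Fin m => E)).symm.toContinuousLinearMap).comp
    ((ContinuousLinearMap.pi fun k => X.comp (ContinuousLinearMap.proj k)).comp
      (PiLp.continuousLinearEquiv 2 ℂ (fun _ : Fin m => E)).toContinuousLinearMap)

/-- Membership in the noncommutative convex hull `K_X`: the tuple `Y` (of operators on a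
Hilbert space `E`, e.g. `E = H_n`) has the form `V* (I_H ⊗ X) V` for an isometry
`V : E → H^∞`, where `H^∞ = ℓ²(ℕ, H)` and `I_H ⊗ X` is the operator acting
componentwise as `X i` on `H^∞`. -/
noncomputable def InKX {H : Type*} [NormedAddCommGroup H] [InnerProductSpace ℂ H]
    [CompleteSpace H] {g : ℕ} (X : Fin g → H →L[ℂ] H)
    {E : Type*} [NormedAddCommGroup E] [InnerProductSpace ℂ E] [CompleteSpace E]
    (Y : Fin g → E →L[ℂ] E) : Prop :=
  ∃ V : E →L[ℂ] lp (fun _ : ℕ => H) 2,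
    (∀ x, ‖V x‖ = ‖x‖) ∧
    ∀ i, ∃ XA : lp (fun _ : ℕ => H) 2 →L[ℂ] lp (fun _ : ℕ => H) 2,
      (∀ (v : lp (fun _ : ℕ => H) 2) (k : ℕ), XA v k = X i (v k)) ∧
      Y i = ((ContinuousLinearMap.adjoint V).comp (XA.comp V))

/-- `0` is in the finite interior of `K_X`: there are `d ∈ ℕ` and a unit vector
`v ∈ H^d` with `v* (I_d ⊗ X) v = 0 ∈ ℝ^g`. -/
noncomputable def ZeroFinInt {H : Type*} [NormedAddCommGroup H] [InnerProductSpace ℂ H]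
    {g : ℕ} (X : Fin g → H →L[ℂ] H) : Prop :=
  ∃ d : ℕ, 0 < d ∧ ∃ v : PiLp 2 (fun _ : Fin d => H), ‖v‖ = 1 ∧
    ∀ i, (inner ℂ (amp d (X i) v) v : ℂ) = 0

/-- Direct sum `A ⊕ B` of operators, acting on the Hilbert space direct sum
`E ⊕ F = WithLp 2 (E × F)`. -/
noncomputable def dsum {E F : Type*} [NormedAddCommGroup E] [InnerProductSpace ℂ E]
    [NormedAddCommGroup F] [InnerProductSpace ℂ F]
    (A : E →L[ℂ] E) (B : F →L[ℂ] F) : WithLp 2 (E × F) →L[ℂ] WithLp 2 (E × F) :=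
  ((WithLp.prodContinuousLinearEquiv 2 ℂ E F).symm.toContinuousLinearMap).comp
    ((A.prodMap B).comp (WithLp.prodContinuousLinearEquiv 2 ℂ E F).toContinuousLinearMap)

/-- Unitary equivalence of tuples of operators (over possibly distinct Hilbert spaces). -/
noncomputable def UEquiv {g : ℕ} {E F : Type*}
    [NormedAddCommGroup E] [InnerProductSpace ℂ E]
    [NormedAddCommGroup F] [InnerProductSpace ℂ F]
    (A : Fin g → E →L[ℂ] E) (B : Fin g → F →L[ℂ] F) : Prop :=
  ∃ U : E ≃ₗᵢ[ℂ] F, ∀ i x, B i (U x) = U (A i x)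

/-- `Y ∈ K_X(n)` is an absolute extreme point of `K_X`: whenever `Y = Σ V_ℓ* Z^ℓ V_ℓ`
is a weakly proper matrix convex combination of elements `Z^ℓ ∈ K_X(n_ℓ)`, then for each
`ℓ` either `n_ℓ = n` and `Z^ℓ` is unitarily equivalent to `Y`, or `n_ℓ > n` and there is
`A ∈ K_X` with `Z^ℓ` unitarily equivalent to `Y ⊕ A`. -/
noncomputable def IsAbsExt {H : Type*} [NormedAddCommGroup H] [InnerProductSpace ℂ H]
    [CompleteSpace H] {g : ℕ} (X : Fin g → H →L[ℂ] H) {n : ℕ}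
    (Y : Fin g → (EuclideanSpace ℂ (Fin n) →L[ℂ] EuclideanSpace ℂ (Fin n))) : Prop :=
  InKX X Y ∧
  ∀ (k : ℕ) (nn : Fin k → ℕ)
    (Z : ∀ ℓ : Fin k, Fin g →
      (EuclideanSpace ℂ (Fin (nn ℓ)) →L[ℂ] EuclideanSpace ℂ (Fin (nn ℓ))))
    (V : ∀ ℓ : Fin k, EuclideanSpace ℂ (Fin n) →L[ℂ] EuclideanSpace ℂ (Fin (nn ℓ))),
    (∀ ℓ, InKX X (Z ℓ)) → (∀ ℓ, V ℓ ≠ 0) →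
    (∑ ℓ, (ContinuousLinearMap.adjoint (V ℓ)).comp (V ℓ)) = 1 →
    (∀ i, Y i = ∑ ℓ, (ContinuousLinearMap.adjoint (V ℓ)).comp (((Z ℓ) i).comp (V ℓ))) →
    ∀ ℓ, (nn ℓ = n ∧ UEquiv Y (Z ℓ)) ∨
      (n < nn ℓ ∧ ∃ (m : ℕ) (A : Fin g →
          (EuclideanSpace ℂ (Fin m) →L[ℂ] EuclideanSpace ℂ (Fin m))),
        InKX X A ∧ UEquiv (fun i => dsum (Y i) (A i)) (Z ℓ))

/-!
Write `Y = V* (I ⊗ X) V` with `V : ℂⁿ → H^∞` an isometry. If the range of `V` is invariant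
under `I ⊗ X`, its image under a coordinate projection on which it does not vanish is a nonzero
finite-dimensional `X`-invariant subspace of `H`, which is excluded. Otherwise some
`(I ⊗ X_i) V x` has a component along a unit vector `w ⊥ ran V`; adjoining `w` to `V` gives
`Z ∈ K_X(n + 1)` compressing to `Y`, so absolute extremality forces `Z ≅ Y ⊕ a` for a scalar `a`.
Comparing the Hilbert–Schmidt norms of `Z - a` and `(Y - a) ⊕ 0` shows that the off-diagonal
blocks of `Z` vanish, contradicting `⟪w, (I ⊗ X_i) V x⟫ ≠ 0`.
-/

open scoped InnerProductSpace

section HilbertSchmidt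

variable {E F ι κ : Type*} [NormedAddCommGroup E] [InnerProductSpace ℂ E]
  [NormedAddCommGroup F] [InnerProductSpace ℂ F] [Fintype ι] [Fintype κ]

lemma ofReal_sum_norm_sq_apply_eq_trace [FiniteDimensional ℂ E] (T : E →ₗ[ℂ] E)
    (b : OrthonormalBasis ι ℂ E) :
    ((∑ i, ‖T (b i)‖ ^ 2 : ℝ) : ℂ) = LinearMap.trace ℂ E (LinearMap.adjoint T ∘ₗ T) := by
  rw [LinearMap.trace_eq_sum_inner _ b]
  push_cast
  refine Finset.sum_congr rfl fun i _ => ?_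
  rw [Function.comp_apply, LinearMap.adjoint_inner_right,
    inner_self_eq_norm_sq_to_K]
  rfl

lemma OrthonormalBasis.sum_norm_sq_apply_eq [FiniteDimensional ℂ E] (T : E →ₗ[ℂ] E)
    (b : OrthonormalBasis ι ℂ E) (b' : OrthonormalBasis κ ℂ E) :
    ∑ i, ‖T (b i)‖ ^ 2 = ∑ j, ‖T (b' j)‖ ^ 2 := by
  exact_mod_cast (ofReal_sum_norm_sq_apply_eq_trace T b).trans
    (ofReal_sum_norm_sq_apply_eq_trace T b').symm

lemma sum_norm_sq_apply_eq_of_intertwine [FiniteDimensional ℂ F] {T : F →L[ℂ] F}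
    {S : E →L[ℂ] E} (U : E ≃ₗᵢ[ℂ] F) (hU : ∀ x, T (U x) = U (S x))
    (b : OrthonormalBasis ι ℂ E) (b' : OrthonormalBasis κ ℂ F) :
    ∑ j, ‖T (b' j)‖ ^ 2 = ∑ i, ‖S (b i)‖ ^ 2 := by
  refine (b'.sum_norm_sq_apply_eq (T : F →ₗ[ℂ] F) (b.map U)).trans ?_
  simp [hU]

end HilbertSchmidt

section DirectSum

variable {E F : Type*} [NormedAddCommGroup E] [InnerProductSpace ℂ E]
  [NormedAddCommGroup F] [InnerProductSpace ℂ F]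

@[simp] lemma dsum_fst (A : E →L[ℂ] E) (B : F →L[ℂ] F) (p : WithLp 2 (E × F)) :
    (dsum A B p).fst = A p.fst := rfl

@[simp] lemma dsum_snd (A : E →L[ℂ] E) (B : F →L[ℂ] F) (p : WithLp 2 (E × F)) :
    (dsum A B p).snd = B p.snd := rfl

@[simp] lemma dsum_toLp (A : E →L[ℂ] E) (B : F →L[ℂ] F) (x : E) (y : F) :
    dsum A B (WithLp.toLp 2 (x, y)) = WithLp.toLp 2 (A x, B y) := rfl

/-- The Hilbert–Schmidt norm of `T` is that of `S ⊕ 0`, i.e. of `S`, yet it also counts the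
entries of the off-diagonal block `x ↦ (T (x, 0)).snd`. -/
theorem snd_apply_toLp_eq_zero_of_intertwine_dsum_zero [FiniteDimensional ℂ E]
    [FiniteDimensional ℂ F] {T : WithLp 2 (E × F) →L[ℂ] WithLp 2 (E × F)} {S : E →L[ℂ] E}
    (U : WithLp 2 (E × F) ≃ₗᵢ[ℂ] WithLp 2 (E × F)) (hU : ∀ p, T (U p) = U (dsum S 0 p))
    (hS : ∀ x, (T (WithLp.toLp 2 (x, 0))).fst = S x) (x : E) :
    (T (WithLp.toLp 2 (x, 0))).snd = 0 := by
  set bE := stdOrthonormalBasis ℂ E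
  set bF := stdOrthonormalBasis ℂ F
  have hHS := sum_norm_sq_apply_eq_of_intertwine U hU (bE.prod bF) (bE.prod bF)
  have hinl : ∀ x, ‖T (WithLp.toLp 2 (x, 0))‖ ^ 2
      = ‖S x‖ ^ 2 + ‖(T (WithLp.toLp 2 (x, 0))).snd‖ ^ 2 := fun x => by
    rw [WithLp.prod_norm_sq_eq_of_L2, hS]
  simp only [Fintype.sum_sum_type, OrthonormalBasis.prod_apply] at hHS
  simp only [LinearMap.coe_inl, LinearMap.coe_inr, Sum.elim_inl, Sum.elim_inr, Function.comp_apply,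
    hinl, Finset.sum_add_distrib, dsum_toLp, zero_apply, WithLp.norm_toLp_fst, map_zero, norm_zero,
    ne_eq, OfNat.ofNat_ne_zero, not_false_eq_true, zero_pow, Finset.sum_const_zero, add_zero] at hHS
  have hsum : ∑ i, ‖(T (WithLp.toLp 2 (bE i, 0))).snd‖ ^ 2 = 0 := by
    have := Finset.sum_nonneg fun j (_ : j ∈ Finset.univ) =>
      sq_nonneg ‖T (WithLp.toLp 2 (0, bF j))‖
    have := Finset.sum_nonneg fun i (_ : i ∈ Finset.univ) =>
      sq_nonneg ‖(T (WithLp.toLp 2 (bE i, 0))).snd‖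
    linarith
  have hbasis : ∀ i, (T (WithLp.toLp 2 (bE i, 0))).snd = 0 := fun i => by
    simpa using (Finset.sum_eq_zero_iff_of_nonneg fun i _ => sq_nonneg _).mp hsum i
  let L : E →ₗ[ℂ] F := WithLp.sndₗ 2 ℂ E F ∘ₗ (T : _ →ₗ[ℂ] _) ∘ₗ
    (WithLp.linearEquiv 2 ℂ (E × F)).symm.toLinearMap ∘ₗ LinearMap.inl ℂ E F
  have hL : L = 0 := bE.toBasis.ext fun i => by simpa [L] using hbasis i
  exact LinearMap.congr_fun hL x

theorem snd_apply_toLp_eq_zero_of_intertwine_dsum [FiniteDimensional ℂ E]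
    [FiniteDimensional ℂ F] (hF : Module.finrank ℂ F = 1)
    {T : WithLp 2 (E × F) →L[ℂ] WithLp 2 (E × F)} {S : E →L[ℂ] E} {A : F →L[ℂ] F} (U : WithLp 2 (E × F) ≃ₗᵢ[ℂ] WithLp 2 (E × F))
    (hU : ∀ p, T (U p) = U (dsum S A p)) (hS : ∀ x, (T (WithLp.toLp 2 (x, 0))).fst = S x)
    (x : E) : (T (WithLp.toLp 2 (x, 0))).snd = 0 := by
  obtain ⟨c, hc, -⟩ := LinearMap.existsUnique_eq_smul_id_of_finrank_eq_one hF (A : F →ₗ[ℂ] F)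
  have hA : ∀ y, A y = c • y := LinearMap.congr_fun hc
  have hshift : ∀ p, dsum (S - c • 1) 0 p = dsum S A p - c • p := fun p => by
    apply WithLp.ofLp_injective
    ext <;> simp [hA]
  have := snd_apply_toLp_eq_zero_of_intertwine_dsum_zero (T := T - c • 1) (S := S - c • 1) U
    (fun p => by simp [hshift, hU]) (fun x => by simp [hS]) x
  simpa using this

end DirectSum

section Amplification

variable {H : Type*} [NormedAddCommGroup H] [NormedSpace ℂ H] {ι : Type*}

theorem exists_finiteDimensional_invariant_of_lp_invariant {X : ι → H →L[ℂ] H}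
    {T : ι → lp (fun _ : ℕ => H) 2 →L[ℂ] lp (fun _ : ℕ => H) 2}
    (hT : ∀ i v k, T i v k = X i (v k)) (M : Submodule ℂ (lp (fun _ : ℕ => H) 2))
    [FiniteDimensional ℂ M] (hM : M ≠ ⊥) (hMT : ∀ i, ∀ v ∈ M, T i v ∈ M) :
    ∃ W : Submodule ℂ H, FiniteDimensional ℂ W ∧ W ≠ ⊥ ∧ ∀ i, ∀ v ∈ W, X i v ∈ W := by
  obtain ⟨v, hvM, hv0⟩ := M.exists_mem_ne_zero_of_ne_bot hM
  obtain ⟨k, hk⟩ : ∃ k, v k ≠ 0 := by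
    by_contra! h
    exact hv0 (lp.ext (funext h))
  refine ⟨M.map (lp.evalₗ _ 2 k), inferInstance, ?_, ?_⟩
  · exact (Submodule.ne_bot_iff _).mpr ⟨v k, ⟨v, hvM, rfl⟩, hk⟩
  · rintro i _ ⟨u, hu, rfl⟩
    exact ⟨T i u, hMT i u hu, hT i u k⟩

end Amplification

section Orthogonal

variable {E F K : Type*} [NormedAddCommGroup E] [InnerProductSpace ℂ E]
  [NormedAddCommGroup F] [InnerProductSpace ℂ F] [NormedAddCommGroup K] [InnerProductSpace ℂ K]

theorem Submodule.exists_norm_eq_one_mem_orthogonal_inner_ne_zero (M : Submodule ℂ K)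
    [M.HasOrthogonalProjection] {r : K} (hr : r ∉ M) :
    ∃ w ∈ Mᗮ, ‖w‖ = 1 ∧ ⟪w, r⟫_ℂ ≠ 0 := by
  by_contra! h
  refine hr (M.orthogonal_orthogonal ▸ fun w hw => ?_)
  rcases eq_or_ne w 0 with rfl | hw0
  · exact inner_zero_left r
  have hnorm : ‖(‖w‖⁻¹ : ℂ) • w‖ = 1 := by
    rw [norm_smul, norm_inv, Complex.norm_real, norm_norm,
      inv_mul_cancel₀ (norm_ne_zero_iff.mpr hw0)]
  have := h _ (Mᗮ.smul_mem _ hw) hnorm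
  rw [inner_smul_left] at this
  simpa [hw0] using this

theorem norm_add_apply_eq_of_orthogonal {V : E →L[ℂ] K} {V' : F →L[ℂ] K}
    (hV : ∀ x, ‖V x‖ = ‖x‖) (hV' : ∀ y, ‖V' y‖ = ‖y‖) (horth : ∀ x y, ⟪V x, V' y⟫_ℂ = 0)
    (p : WithLp 2 (E × F)) : ‖V p.fst + V' p.snd‖ = ‖p‖ := by
  rw [← sq_eq_sq₀ (norm_nonneg _) (norm_nonneg _), WithLp.prod_norm_sq_eq_of_L2,
    @norm_add_sq ℂ, horth, hV, hV']
  simp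

theorem exists_isometry_prod_extension {V : E →L[ℂ] K} (hV : ∀ x, ‖V x‖ = ‖x‖) {w : K}
    (hw : ‖w‖ = 1) (hVw : ∀ x, ⟪V x, w⟫_ℂ = 0) :
    ∃ W : WithLp 2 (E × EuclideanSpace ℂ (Fin 1)) →L[ℂ] K, (∀ p, ‖W p‖ = ‖p‖) ∧
      (∀ x, W (WithLp.toLp 2 (x, 0)) = V x) ∧
      W (WithLp.toLp 2 (0, EuclideanSpace.single 0 1)) = w := by
  let V' := (ContinuousLinearMap.toSpanSingleton ℂ w).comp (EuclideanSpace.proj (0 : Fin 1))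
  have hV' : ∀ y, V' y = y 0 • w := fun y => rfl
  refine ⟨(V.coprod V').comp (WithLp.prodContinuousLinearEquiv 2 ℂ _ _).toContinuousLinearMap,
    norm_add_apply_eq_of_orthogonal (V' := V') hV (fun y => ?_) (fun x y => ?_),
    fun x => by simp [hV'], by simp [hV']⟩
  · rw [hV', norm_smul, hw, mul_one, EuclideanSpace.norm_eq, Fin.sum_univ_one,
      Real.sqrt_sq (norm_nonneg _)]
  · rw [hV', inner_smul_right, hVw, mul_zero]

end Orthogonal

section AbsoluteExtreme

open ContinuousLinearMap

variable {H : Type*} [NormedAddCommGroup H] [InnerProductSpace ℂ H] [CompleteSpace H] {g n : ℕ}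
  {X : Fin g → H →L[ℂ] H}

theorem IsAbsExt.exists_intertwine_dsum (hn : 0 < n)
    {Y : Fin g → (EuclideanSpace ℂ (Fin n) →L[ℂ] EuclideanSpace ℂ (Fin n))} (hY : IsAbsExt X Y)
    {Z : Fin g → (EuclideanSpace ℂ (Fin (n + 1)) →L[ℂ] EuclideanSpace ℂ (Fin (n + 1)))}
    (hZ : InKX X Z) {ι : EuclideanSpace ℂ (Fin n) →L[ℂ] EuclideanSpace ℂ (Fin (n + 1))}
    (hι : ∀ x, ‖ι x‖ = ‖x‖) (hYZ : ∀ i, Y i = adjoint ι ∘L Z i ∘L ι) :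
    ∃ (A : Fin g → (EuclideanSpace ℂ (Fin 1) →L[ℂ] EuclideanSpace ℂ (Fin 1)))
      (U : WithLp 2 (EuclideanSpace ℂ (Fin n) × EuclideanSpace ℂ (Fin 1)) ≃ₗᵢ[ℂ]
        EuclideanSpace ℂ (Fin (n + 1))),
      ∀ i p, Z i (U p) = U (dsum (Y i) (A i) p) := by
  have hι0 : ι ≠ 0 := fun h => by simpa [h] using hι (EuclideanSpace.single ⟨0, hn⟩ 1)
  have hιι := (norm_map_iff_adjoint_comp_self ι).mp hι
  obtain ⟨hn, -⟩ | ⟨-, m, A, -, U, hU⟩ := hY.2 1 (fun _ => n + 1) (fun _ => Z) (fun _ => ι)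
    (fun _ => hZ) (fun _ => hι0) (by simpa using hιι) (fun i => by simpa using hYZ i) 0
  · omega
  obtain rfl : m = 1 := by
    simpa [(WithLp.linearEquiv 2 ℂ _).finrank_eq] using U.toLinearEquiv.finrank_eq
  exact ⟨A, U, hU⟩

theorem IsAbsExt.inner_apply_eq_zero (hn : 0 < n)
    {Y : Fin g → (EuclideanSpace ℂ (Fin n) →L[ℂ] EuclideanSpace ℂ (Fin n))} (hY : IsAbsExt X Y)
    {V : EuclideanSpace ℂ (Fin n) →L[ℂ] lp (fun _ : ℕ => H) 2}
    {XA : Fin g → lp (fun _ : ℕ => H) 2 →L[ℂ] lp (fun _ : ℕ => H) 2}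
    (hXA : ∀ i v k, XA i v k = X i (v k)) (hYV : ∀ i, Y i = adjoint V ∘L XA i ∘L V)
    {W : WithLp 2 (EuclideanSpace ℂ (Fin n) × EuclideanSpace ℂ (Fin 1)) →L[ℂ]
      lp (fun _ : ℕ => H) 2}
    (hW : ∀ p, ‖W p‖ = ‖p‖) (hWV : ∀ x, W (WithLp.toLp 2 (x, 0)) = V x)
    (i : Fin g) (x : EuclideanSpace ℂ (Fin n)) (y : EuclideanSpace ℂ (Fin 1)) :
    ⟪W (WithLp.toLp 2 (0, y)), XA i (V x)⟫_ℂ = 0 := by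
  let Φ := (((EuclideanSpace.basisFun (Fin n) ℂ).prod
    (EuclideanSpace.basisFun (Fin 1) ℂ)).reindex finSumFinEquiv).repr
  let W' := W ∘L Φ.symm.toContinuousLinearEquiv.toContinuousLinearMap
  let ι := Φ.toContinuousLinearEquiv.toContinuousLinearMap
    ∘L (WithLp.prodContinuousLinearEquiv 2 ℂ _ _).symm.toContinuousLinearMap
    ∘L ContinuousLinearMap.inl ℂ (EuclideanSpace ℂ (Fin n)) (EuclideanSpace ℂ (Fin 1))
  have hWι : W' ∘L ι = V := ext fun x => by simp [W', ι, hWV]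
  obtain ⟨A, U, hU⟩ := hY.exists_intertwine_dsum hn (Z := fun i => adjoint W' ∘L XA i ∘L W')
    ⟨W', fun p => by simp [W', hW], fun i => ⟨XA i, hXA i, rfl⟩⟩ (ι := ι)
    (fun x => by simp [ι]) (fun i => by rw [hYV, ← hWι, adjoint_comp]; rfl)
  let T := Φ.symm.toContinuousLinearEquiv.toContinuousLinearMap
    ∘L (adjoint W' ∘L XA i ∘L W') ∘L Φ.toContinuousLinearEquiv.toContinuousLinearMap
  have hT : ∀ p p', ⟪p', T p⟫_ℂ = ⟪W p', XA i (W p)⟫_ℂ := by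
    intro p p'
    simp [T, W', ← LinearIsometryEquiv.inner_map_eq_flip, adjoint_inner_right]
  have hTU : ∀ p, T ((U.trans Φ.symm) p) = (U.trans Φ.symm) (dsum (Y i) (A i) p) := fun p => by
    simp only [T, ContinuousLinearMap.comp_apply, LinearIsometryEquiv.trans_apply,
      ContinuousLinearEquiv.coe_coe, LinearIsometryEquiv.coe_toContinuousLinearEquiv,
      LinearIsometryEquiv.apply_symm_apply, ← hU]
  -- otherwise unification below unfolds `T` down to the basis defining `Φ`
  clear_value T
  have hsnd : (T (WithLp.toLp 2 (x, 0))).snd = 0 := by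
    refine snd_apply_toLp_eq_zero_of_intertwine_dsum (by simp) (U.trans Φ.symm) hTU
      (fun x => ext_inner_left ℂ fun x' => ?_) x
    simpa [hWV, hYV, adjoint_inner_right] using
      hT (WithLp.toLp 2 (x, 0)) (WithLp.toLp 2 (x', 0))
  simp [← hWV, ← hT, hsnd]

end AbsoluteExtreme

theorem KX_no_absolute_extreme_points_general
    {H : Type*} [NormedAddCommGroup H] [InnerProductSpace ℂ H] [CompleteSpace H]
    {g : ℕ} (X : Fin g → H →L[ℂ] H)
    (hred : ∀ Wsub : Submodule ℂ H, IsClosed (Wsub : Set H) →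
      (∀ i, ∀ v ∈ Wsub, X i v ∈ Wsub) → Wsub ≠ ⊥ → ¬ FiniteDimensional ℂ Wsub) :
    ∀ (n : ℕ), 0 < n →
      ∀ Y : Fin g → (EuclideanSpace ℂ (Fin n) →L[ℂ] EuclideanSpace ℂ (Fin n)),
        ¬ IsAbsExt X Y := by
  intro n hn Y hY
  obtain ⟨V, hV, hXA⟩ := hY.1
  choose XA hXA hYV using hXA
  by_cases hinv : ∀ i x, XA i (V x) ∈ LinearMap.range V.toLinearMap
  · have hM : LinearMap.range V.toLinearMap ≠ ⊥ := by
      let e := EuclideanSpace.single (⟨0, hn⟩ : Fin n) (1 : ℂ)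
      exact (Submodule.ne_bot_iff _).mpr ⟨V e, ⟨e, rfl⟩, fun h => by simpa [e, h] using hV e⟩
    obtain ⟨W, hWfin, hW0, hWX⟩ := exists_finiteDimensional_invariant_of_lp_invariant hXA
      (LinearMap.range V.toLinearMap) hM (by rintro i _ ⟨x, rfl⟩; exact hinv i x)
    exact hred W W.closed_of_finiteDimensional hWX hW0 hWfin
  obtain ⟨i, x, hx⟩ : ∃ i x, XA i (V x) ∉ LinearMap.range V.toLinearMap := by
    simpa only [not_forall] using hinv
  obtain ⟨w, hwM, hw1, hwx⟩ :=
    (LinearMap.range V.toLinearMap).exists_norm_eq_one_mem_orthogonal_inner_ne_zero hx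
  obtain ⟨W, hW, hWV, hWw⟩ := exists_isometry_prod_extension hV hw1 fun u =>
    Submodule.inner_right_of_mem_orthogonal (LinearMap.mem_range_self V.toLinearMap u) hwM
  exact hwx (hWw ▸ hY.inner_apply_eq_zero hn hXA hYV hW hWV i x _)

/-- Theorem 1.2 of the paper: if `X` is a tuple of compact self-adjoint
operators on a separable Hilbert space with no nontrivial finite dimensional reducing
subspaces and `0` is in the finite interior of `K_X`, then `K_X` has no absolute
extreme points. -/
theorem KX_no_absolute_extreme_points
    {H : Type*} [NormedAddCommGroup H] [InnerProductSpace ℂ H] [CompleteSpace H]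
    [TopologicalSpace.SeparableSpace H]
    {g : ℕ} (X : Fin g → H →L[ℂ] H)
    (hXc : ∀ i, IsCompactOperator (X i)) (hXsa : ∀ i, IsSelfAdjoint (X i))
    (hred : ∀ Wsub : Submodule ℂ H, IsClosed (Wsub : Set H) →
      (∀ i, ∀ v ∈ Wsub, X i v ∈ Wsub) → Wsub ≠ ⊥ → ¬ FiniteDimensional ℂ Wsub)
    (h0 : ZeroFinInt X) :
    ∀ (n : ℕ), 0 < n →
      ∀ Y : Fin g → (EuclideanSpace ℂ (Fin n) →L[ℂ] EuclideanSpace ℂ (Fin n)),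
        ¬ IsAbsExt X Y :=
  KX_no_absolute_extreme_points_general X hred
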